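/- Let φ ∈ Λ⁴V be a decomposable 4-form. Then for all u,v,w ∈ V the cyclic sum [[β^φ_u, β^φ_v], ι(w)] + [[β^φ_v, β^φ_w], ι(u)] + [[β^φ_w, β^φ_u], ι(v)] = 0 in Cl(V), where [x,y] := x·y − y·x. (This is the [VVV] component of the Jacobi identity for the filtered deformation determined by φ.) -/

import Mathlib

noncomputable section

variable (V : Type) [AddCommGroup V] [Module ℝ V]

/-- The quadratic form `v ↦ -η(v,v)`; its Clifford algebra satisfies
`ι v * ι v = -η(v,v) • 1`. -/
def Qf (η : LinearMap.BilinForm ℝ V) : QuadraticForm ℝ V := (-η).toQuadraticMap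

/-- `A` belongs to `so(V)`: it is skew-adjoint with respect to `η`. -/
def IsSkew (η : LinearMap.BilinForm ℝ V) (A : Module.End ℝ V) : Prop :=
  ∀ v w : V, η (A v) w + η v (A w) = 0

/-- `e` is an `η`-orthonormal basis exhibiting the 'mostly minus' Lorentzian
signature `(1,10)` in dimension 11. -/
def IsLorentzianBasis (η : LinearMap.BilinForm ℝ V) (e : Module.Basis (Fin 11) ℝ V) : Prop :=
  ∀ i j, η (e i) (e j) = if i = j then (if (i : ℕ) = 0 then 1 else -1) else 0

/-- `hat η θ` is the image of `θ ∈ ΛV` under the inverse of the canonical linear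
isomorphism `Cl(V) ≅ ΛV` (Mathlib's `CliffordAlgebra.equivExterior`). -/
def hat (η : LinearMap.BilinForm ℝ V) (θ : ExteriorAlgebra ℝ V) : CliffordAlgebra (Qf V η) :=
  (CliffordAlgebra.equivExterior (Qf V η)).symm θ

/-- `β^φ_v = ι(v)·φ̂ − 3·φ̂·ι(v)` in the Clifford algebra. -/
def betaPhi (η : LinearMap.BilinForm ℝ V) (φ : ExteriorAlgebra ℝ V) (v : V) :
    CliffordAlgebra (Qf V η) :=
  CliffordAlgebra.ι (Qf V η) v * hat V η φ - (3 : ℝ) • (hat V η φ * CliffordAlgebra.ι (Qf V η) v)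

/-- `φ` is a decomposable 4-form: a wedge of four vectors (wedge product in the exterior
algebra is multiplication). -/
def Decomposable4 (φ : ExteriorAlgebra ℝ V) : Prop :=
  ∃ x₁ x₂ x₃ x₄ : V, φ = ExteriorAlgebra.ι ℝ x₁ * ExteriorAlgebra.ι ℝ x₂ *
    ExteriorAlgebra.ι ℝ x₃ * ExteriorAlgebra.ι ℝ x₄

/-- The commutator `[x,y] = x·y − y·x` in the Clifford algebra. -/
def brk (η : LinearMap.BilinForm ℝ V) (x y : CliffordAlgebra (Qf V η)) :
    CliffordAlgebra (Qf V η) := x * y - y * x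

/-!
Write `φ = x₁∧x₂∧x₃∧x₄` as `z₁∧z₂∧z₃∧z₄` with the `zᵢ` pairwise orthogonal: take an orthogonal
basis of `span {xᵢ}` and absorb the determinant into `z₁`. Then `φ̂ = z₁z₂z₃z₄`, and moving vectors
past this product with the Clifford relations shows that `[β_u, β_v]` is a linear combination of
products `ab` of two vectors. As `[ab, w] = ⟪w, b⟫ a − ⟪w, a⟫ b` for the polar form `⟪·,·⟫`, each
`[[β_u, β_v], w]` is a vector, and the cyclic sum of these vectors cancels identically.
-/

theorem QuadraticMap.IsOrtho.smul_left {R M N : Type*} [CommRing R] [AddCommGroup M] [Module R M]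
    [AddCommGroup N] [Module R N] {Q : QuadraticMap R M N} {x y : M} (h : Q.IsOrtho x y) (c : R) :
    Q.IsOrtho (c • x) y := by
  rw [← QuadraticMap.isOrtho_polarBilin, map_smul, LinearMap.smul_apply,
    QuadraticMap.isOrtho_polarBilin.mpr h, smul_zero]

theorem AlternatingMap.apply_eq_det_smul {R M N ι : Type*} [CommRing R] [AddCommGroup M]
    [Module R M] [AddCommGroup N] [Module R N] [Fintype ι] [DecidableEq ι]
    (f : M [⋀^ι]→ₗ[R] N) (e : Module.Basis ι R M) (v : ι → M) : f v = e.det v • f e := by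
  suffices h : f = (LinearMap.toSpanSingleton R N (f e)).compAlternatingMap e.det by
    simpa using congrArg (fun g => g v) h
  refine e.ext_alternating fun i hi => ?_
  let σ : Equiv.Perm ι := Equiv.ofBijective i (Finite.injective_iff_bijective.1 hi)
  change f (e ∘ σ) = (LinearMap.toSpanSingleton R N (f e)).compAlternatingMap e.det (e ∘ σ)
  simp [AlternatingMap.map_perm, Module.Basis.det_self]

namespace ExteriorAlgebra

variable {K M : Type*} [Field K] [Invertible (2 : K)] [AddCommGroup M] [Module K M]

theorem exists_pairwise_isOrtho_ιMulti_eq_smul (Q : QuadraticForm K M) {n : ℕ} {x : Fin n → M}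
    (hx : LinearIndependent K x) :
    ∃ (c : K) (y : Fin n → M), Pairwise (fun i j => Q.IsOrtho (y i) (y j)) ∧
      ιMulti K n x = c • ιMulti K n y := by
  set W := Submodule.span K (Set.range x)
  have : FiniteDimensional K W := .span_of_finite K (Set.finite_range x)
  have hrank : Module.finrank K W = n := by rw [finrank_span_eq_card hx, Fintype.card_fin]
  obtain ⟨b, hb⟩ := LinearMap.BilinForm.exists_orthogonal_basis
    (B := Q.polarBilin.domRestrict₁₂ W W) ⟨fun a b => QuadraticMap.polar_comm _ _ _⟩
  let y := b.reindex (finCongr hrank)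
  let xW : Fin n → W := fun i => ⟨x i, Submodule.subset_span ⟨i, rfl⟩⟩
  refine ⟨y.det xW, fun i => y i, fun i j hij => ?_,
    ((ιMulti K n).compLinearMap W.subtype).apply_eq_det_smul y xW⟩
  have := hb ((finCongr hrank).symm.injective.ne hij)
  simpa [y, Function.onFun, ← QuadraticMap.isOrtho_polarBilin, LinearMap.domRestrict₁₂_apply]
    using this

theorem exists_pairwise_isOrtho_ιMulti_eq (Q : QuadraticForm K M) {n : ℕ} (x : Fin n → M) :
    ∃ z : Fin n → M, Pairwise (fun i j => Q.IsOrtho (z i) (z j)) ∧ ιMulti K n x = ιMulti K n z := by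
  rcases n with _ | n
  · exact ⟨x, fun i => i.elim0, rfl⟩
  by_cases hx : LinearIndependent K x
  · obtain ⟨c, y, hy, hxy⟩ := exists_pairwise_isOrtho_ιMulti_eq_smul Q hx
    refine ⟨Function.update y 0 (c • y 0), fun i j hij => ?_, ?_⟩
    · simp only [Function.update_apply]
      split_ifs with hi hj hj
      · exact absurd (hi.trans hj.symm) hij
      · subst hi; exact (hy hij).smul_left c
      · subst hj; exact ((hy hij.symm).smul_left c).symm
      · exact hy hij
    · rw [hxy, AlternatingMap.map_update_smul, Function.update_eq_self]
  · refine ⟨0, fun i j _ => QuadraticMap.IsOrtho.zero_left 0, ?_⟩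
    rw [AlternatingMap.map_linearDependent _ _ hx, AlternatingMap.map_zero]

end ExteriorAlgebra

namespace CliffordAlgebra

variable {R M : Type*} [CommRing R] [AddCommGroup M] [Module R M] {Q : QuadraticForm R M}

theorem contractLeft_list_prod_map_ι (d : Module.Dual R M) (l : List M)
    (hl : ∀ a ∈ l, d a = 0) : contractLeft d (l.map (ι Q)).prod = 0 := by
  induction l with
  | nil => exact contractLeft_one Q d
  | cons a l ih =>
    rw [List.map_cons, List.prod_cons, contractLeft_ι_mul, hl a List.mem_cons_self,
      ih fun b hb => hl b (List.mem_cons_of_mem a hb), zero_smul, mul_zero, sub_zero]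

theorem changeForm_list_prod_map_ι {Q' : QuadraticForm R M} {B : LinearMap.BilinForm R M}
    (h : B.toQuadraticMap = Q' - Q) (l : List M) (hl : l.Pairwise fun a b => B a b = 0) :
    changeForm h (l.map (ι Q)).prod = (l.map (ι Q')).prod := by
  induction l with
  | nil => exact changeForm_one h
  | cons a l ih =>
    rw [List.pairwise_cons] at hl
    rw [List.map_cons, List.prod_cons, changeForm_ι_mul, ih hl.2,
      contractLeft_list_prod_map_ι _ _ hl.1, sub_zero, List.map_cons, List.prod_cons]

theorem equivExterior_symm_ιMulti [Invertible (2 : R)] {n : ℕ}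
    {z : Fin n → M} (hz : Pairwise fun i j => Q.IsOrtho (z i) (z j)) :
    (equivExterior Q).symm (ExteriorAlgebra.ιMulti R n z) =
      (List.ofFn fun i => ι Q (z i)).prod := by
  have hassoc : List.Pairwise (fun a b => QuadraticMap.associated (-Q) a b = 0) (List.ofFn z) :=
    List.pairwise_ofFn.mpr fun i j hij => by
      simpa only [map_neg, LinearMap.neg_apply, neg_eq_zero, QuadraticMap.associated_isOrtho]
        using hz hij.ne
  have h := changeForm_list_prod_map_ι changeForm.associated_neg_proof _ hassoc
  rw [List.map_ofFn, List.map_ofFn] at h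
  rw [LinearEquiv.symm_apply_eq, ExteriorAlgebra.ιMulti_apply]
  exact h.symm

open QuadraticMap (polar)

theorem ι_mul_ι_mul_swap (a b : M) (x : CliffordAlgebra Q) :
    ι Q a * (ι Q b * x) = polar Q a b • x - ι Q b * (ι Q a * x) := by
  rw [← mul_assoc, ι_mul_ι_comm, sub_mul, ← Algebra.smul_def, mul_assoc]

theorem ι_mul_ι_mul_self (a : M) (x : CliffordAlgebra Q) : ι Q a * (ι Q a * x) = Q a • x := by
  rw [← mul_assoc, ι_sq_scalar, ← Algebra.smul_def]

theorem lie_ι_mul_ι_ι (x y w : M) :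
    ⁅ι Q x * ι Q y, ι Q w⁆ = ι Q (polar Q w y • x - polar Q w x • y) := by
  rw [Ring.lie_def, mul_assoc, ι_mul_ι_comm y w, ← mul_assoc (ι Q w), ι_mul_ι_comm w x,
    QuadraticMap.polar_comm Q y w]
  simp only [Algebra.algebraMap_eq_smul_one, mul_sub, sub_mul, mul_smul_comm, smul_mul_assoc,
    mul_one, one_mul, mul_assoc, map_sub, map_smul]
  abel

def betaOf (P : CliffordAlgebra Q) (a : M) : CliffordAlgebra Q :=
  ι Q a * P - (3 : R) • (P * ι Q a)

section OrthogonalProduct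

variable {z₁ z₂ z₃ z₄ : M} (h₁₂ : Q.IsOrtho z₁ z₂) (h₁₃ : Q.IsOrtho z₁ z₃)
  (h₁₄ : Q.IsOrtho z₁ z₄) (h₂₃ : Q.IsOrtho z₂ z₃) (h₂₄ : Q.IsOrtho z₂ z₄) (h₃₄ : Q.IsOrtho z₃ z₄)
include h₁₂ h₁₃ h₁₄ h₂₃ h₂₄ h₃₄

local notation "P" => ι Q z₁ * ι Q z₂ * ι Q z₃ * ι Q z₄

set_option maxHeartbeats 1000000 in
theorem lie_betaOf_betaOf (u v : M) :
    ⁅betaOf P u, betaOf P v⁆ =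
      (4 * (Q z₁ * Q z₂ * Q z₃ * Q z₄)) • ⁅ι Q u, ι Q v⁆
      + (4 * (Q z₂ * Q z₃ * Q z₄)) •
          (polar Q u z₁ • (ι Q v * ι Q z₁) - polar Q v z₁ • (ι Q u * ι Q z₁))
      + (4 * (Q z₁ * Q z₃ * Q z₄)) •
          (polar Q u z₂ • (ι Q v * ι Q z₂) - polar Q v z₂ • (ι Q u * ι Q z₂))
      + (4 * (Q z₁ * Q z₂ * Q z₄)) •
          (polar Q u z₃ • (ι Q v * ι Q z₃) - polar Q v z₃ • (ι Q u * ι Q z₃))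
      + (4 * (Q z₁ * Q z₂ * Q z₃)) •
          (polar Q u z₄ • (ι Q v * ι Q z₄) - polar Q v z₄ • (ι Q u * ι Q z₄))
      - (6 * (Q z₃ * Q z₄) * (polar Q u z₁ * polar Q v z₂ - polar Q u z₂ * polar Q v z₁)) •
          (ι Q z₁ * ι Q z₂)
      - (6 * (Q z₂ * Q z₄) * (polar Q u z₁ * polar Q v z₃ - polar Q u z₃ * polar Q v z₁)) •
          (ι Q z₁ * ι Q z₃)
      - (6 * (Q z₂ * Q z₃) * (polar Q u z₁ * polar Q v z₄ - polar Q u z₄ * polar Q v z₁)) •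
          (ι Q z₁ * ι Q z₄)
      - (6 * (Q z₁ * Q z₄) * (polar Q u z₂ * polar Q v z₃ - polar Q u z₃ * polar Q v z₂)) •
          (ι Q z₂ * ι Q z₃)
      - (6 * (Q z₁ * Q z₃) * (polar Q u z₂ * polar Q v z₄ - polar Q u z₄ * polar Q v z₂)) •
          (ι Q z₂ * ι Q z₄)
      - (6 * (Q z₁ * Q z₂) * (polar Q u z₃ * polar Q v z₄ - polar Q u z₄ * polar Q v z₃)) •
          (ι Q z₃ * ι Q z₄) := by
  -- Rewrite every monomial into the order `u, v, z₁, z₂, z₃, z₄`, then compare coefficients.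
  simp only [betaOf, Ring.lie_def, mul_assoc, mul_sub, sub_mul, smul_mul_assoc, mul_smul_comm,
    smul_sub, smul_smul, ι_mul_ι_mul_of_isOrtho _ h₁₂.symm, ι_mul_ι_mul_of_isOrtho _ h₁₃.symm,
    ι_mul_ι_mul_of_isOrtho _ h₁₄.symm, ι_mul_ι_mul_of_isOrtho _ h₂₃.symm,
    ι_mul_ι_mul_of_isOrtho _ h₂₄.symm, ι_mul_ι_mul_of_isOrtho _ h₃₄.symm,
    ι_mul_ι_comm_of_isOrtho h₁₂.symm, ι_mul_ι_comm_of_isOrtho h₂₃.symm,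
    ι_mul_ι_comm_of_isOrtho h₃₄.symm, ι_mul_ι_mul_self, ι_sq_scalar,
    ι_mul_ι_mul_swap z₁ u, ι_mul_ι_mul_swap z₂ u, ι_mul_ι_mul_swap z₃ u, ι_mul_ι_mul_swap z₄ u,
    ι_mul_ι_mul_swap z₁ v, ι_mul_ι_mul_swap z₂ v, ι_mul_ι_mul_swap z₃ v, ι_mul_ι_mul_swap z₄ v,
    ι_mul_ι_comm z₄ u, ι_mul_ι_comm z₄ v, ι_mul_ι_comm v u, Algebra.algebraMap_eq_smul_one,
    QuadraticMap.polar_comm Q z₁ u, QuadraticMap.polar_comm Q z₂ u,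
    QuadraticMap.polar_comm Q z₃ u, QuadraticMap.polar_comm Q z₄ u,
    QuadraticMap.polar_comm Q z₁ v, QuadraticMap.polar_comm Q z₂ v,
    QuadraticMap.polar_comm Q z₃ v, QuadraticMap.polar_comm Q z₄ v, QuadraticMap.polar_comm Q v u,
    mul_neg, smul_neg, mul_one, neg_neg]
  module

theorem betaOf_jacobi (u v w : M) :
    ⁅⁅betaOf P u, betaOf P v⁆, ι Q w⁆ + ⁅⁅betaOf P v, betaOf P w⁆, ι Q u⁆
      + ⁅⁅betaOf P w, betaOf P u⁆, ι Q v⁆ = 0 := by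
  have move_past (x y a : M) :
      ι Q x * ι Q y * ι Q a = ι Q a * (ι Q x * ι Q y) + ι Q (polar Q a y • x - polar Q a x • y) :=
    eq_add_of_sub_eq' (lie_ι_mul_ι_ι x y a)
  rw [lie_betaOf_betaOf h₁₂ h₁₃ h₁₄ h₂₃ h₂₄ h₃₄, lie_betaOf_betaOf h₁₂ h₁₃ h₁₄ h₂₃ h₂₄ h₃₄,
    lie_betaOf_betaOf h₁₂ h₁₃ h₁₄ h₂₃ h₂₄ h₃₄]
  simp only [Ring.lie_def, add_mul, sub_mul, mul_add, mul_sub, smul_mul_assoc, mul_smul_comm,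
    move_past, map_sub, map_smul, QuadraticMap.polar_comm Q v u, QuadraticMap.polar_comm Q w u,
    QuadraticMap.polar_comm Q w v]
  module

end OrthogonalProduct

end CliffordAlgebra

theorem stmt_7
    (η : LinearMap.BilinForm ℝ V)
    (φ : ExteriorAlgebra ℝ V) (hφdec : Decomposable4 V φ) :
    ∀ u v w : V,
      brk V η (brk V η (betaPhi V η φ u) (betaPhi V η φ v)) (CliffordAlgebra.ι (Qf V η) w)
      + brk V η (brk V η (betaPhi V η φ v) (betaPhi V η φ w)) (CliffordAlgebra.ι (Qf V η) u)
      + brk V η (brk V η (betaPhi V η φ w) (betaPhi V η φ u)) (CliffordAlgebra.ι (Qf V η) v)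
      = 0 := by
  obtain ⟨x₁, x₂, x₃, x₄, rfl⟩ := hφdec
  obtain ⟨z, hz, hxz⟩ :=
    ExteriorAlgebra.exists_pairwise_isOrtho_ιMulti_eq (Qf V η) ![x₁, x₂, x₃, x₄]
  have hφ : hat V η (ExteriorAlgebra.ι ℝ x₁ * ExteriorAlgebra.ι ℝ x₂ * ExteriorAlgebra.ι ℝ x₃ *
      ExteriorAlgebra.ι ℝ x₄) = CliffordAlgebra.ι _ (z 0) * CliffordAlgebra.ι _ (z 1) *
        CliffordAlgebra.ι _ (z 2) * CliffordAlgebra.ι _ (z 3) := by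
    have h := CliffordAlgebra.equivExterior_symm_ιMulti hz
    rw [← hxz] at h
    simpa [hat, ExteriorAlgebra.ιMulti_apply, List.ofFn_succ, mul_assoc] using h
  intro u v w
  simp only [brk, betaPhi, hφ]
  exact CliffordAlgebra.betaOf_jacobi (hz (by decide)) (hz (by decide)) (hz (by decide))
    (hz (by decide)) (hz (by decide)) (hz (by decide)) u v w
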